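/- arXiv:1903.11346 — 2 statements merged into one kernel-verified Lean document; each statement's English description precedes it below -/
import Mathlib

section
/- Let S and K be nonempty open bounded intervals of ℝ and let h > 0. The adjoint field operator b₂* is injective: if φ ∈ L²(K) satisfies ((∂ₓP_h) ⋆ φ̃)(t) = 0 and ((∂ₓQ_h) ⋆ φ̃)(t) = 0 for almost every t ∈ S, then φ = 0 almost everywhere on K. -/
open MeasureTheory

/-- Poisson kernel of the upper half-plane at height `y`. -/
noncomputable def Pker (y x : ℝ) : ℝ := (1 / Real.pi) * y / (x ^ 2 + y ^ 2)

/-- Conjugate Poisson kernel at height `y`. -/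
noncomputable def Qker (y x : ℝ) : ℝ := (1 / Real.pi) * x / (x ^ 2 + y ^ 2)

/-- Partial derivative in `x` of the Poisson kernel. -/
noncomputable def dPdx (y x : ℝ) : ℝ := -(1 / Real.pi) * (2 * x * y) / (x ^ 2 + y ^ 2) ^ 2

/-- Partial derivative in `y` of the Poisson kernel. -/
noncomputable def dPdy (y x : ℝ) : ℝ := (1 / Real.pi) * (x ^ 2 - y ^ 2) / (x ^ 2 + y ^ 2) ^ 2

/-- Partial derivative in `x` of the conjugate Poisson kernel. -/
noncomputable def dQdx (y x : ℝ) : ℝ := (1 / Real.pi) * (y ^ 2 - x ^ 2) / (x ^ 2 + y ^ 2) ^ 2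

/-- Convolution on `ℝ`: `(k ⋆ g) x = ∫ k (x - t) * g t dt`. -/
noncomputable def conv (k g : ℝ → ℝ) (x : ℝ) : ℝ := ∫ t, k (x - t) * g t

/-!
The kernel identity `((x + i h) ^ 2)⁻¹ = π i (∂ₓP_h + i ∂ₓQ_h)(x)` says that
`-π i ((∂ₓP_h ⋆ φ̃)(t) + i (∂ₓQ_h ⋆ φ̃)(t))` is the derivative at `t + i h` of the Cauchy
transform `F z = ∫_K φ s / (z - s) ds`, which is holomorphic on the upper half-plane.
So `F'` vanishes a.e. on a horizontal segment, hence everywhere by the identity theorem; `F` is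
then constant, and the constant is `0` because `F (i y) → 0` as `y → ∞`. Since
`i y F (i y) → ∫ φ` and the transform of `s φ` is `z F z - ∫ φ`, induction shows that all
moments of `φ` vanish, and Weierstrass approximation gives `φ = 0`.
-/

open Complex Filter Topology Set Real

local notation "ℍₒ" => UpperHalfPlane.upperHalfPlaneSet

lemma MeasureTheory.Integrable.continuous_smul_of_ae_mem_compact {α E : Type*}
    [TopologicalSpace α] [MeasurableSpace α] [OpensMeasurableSpace α] [NormedAddCommGroup E]
    [NormedSpace ℝ E] {μ : Measure α} {f : α → E} {g : α → ℝ} {K : Set α} (hf : Integrable f μ)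
    (hg : Continuous g) (hK : IsCompact K) (hμ : ∀ᵐ x ∂μ, x ∈ K) :
    Integrable (fun x => g x • f x) μ := by
  obtain ⟨C, hC⟩ := hK.exists_bound_of_continuousOn hg.continuousOn
  exact hf.bdd_smul C hg.aestronglyMeasurable (hμ.mono hC)

section Moments

variable {E : Type*} [NormedAddCommGroup E] [NormedSpace ℝ E] {μ : Measure ℝ}
  {f : ℝ → E} {a b : ℝ}

lemma integral_continuous_smul_eq_zero_of_integral_pow_smul_eq_zero (hf : Integrable f μ)
    (hμ : ∀ᵐ s ∂μ, s ∈ Icc a b) (hmom : ∀ n : ℕ, ∫ s, s ^ n • f s ∂μ = 0) {g : ℝ → ℝ}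
    (hg : Continuous g) : ∫ s, g s • f s ∂μ = 0 := by
  have hint : ∀ g : ℝ → ℝ, Continuous g → Integrable (fun s => g s • f s) μ :=
    fun g hg => hf.continuous_smul_of_ae_mem_compact hg isCompact_Icc hμ
  have hpoly : ∀ p : Polynomial ℝ, ∫ s, p.eval s • f s ∂μ = 0 := by
    intro p
    simp_rw [Polynomial.eval_eq_sum_range, Finset.sum_smul]
    rw [integral_finsetSum _ fun k _ => hint _ (by fun_prop)]
    refine Finset.sum_eq_zero fun k _ => ?_
    simp_rw [mul_smul, integral_smul, hmom, smul_zero]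
  have happrox : ∀ ε > 0, ‖∫ s, g s • f s ∂μ‖ ≤ ε * ∫ s, ‖f s‖ ∂μ := by
    intro ε hε
    obtain ⟨p, hp⟩ := exists_polynomial_near_of_continuousOn a b g hg.continuousOn ε hε
    have hdiff : ∫ s, g s • f s ∂μ = ∫ s, (g s - p.eval s) • f s ∂μ := by
      simp_rw [sub_smul]
      rw [integral_sub (hint g hg) (hint _ p.continuous), hpoly, sub_zero]
    rw [hdiff, ← integral_const_mul]
    refine norm_integral_le_of_norm_le (hf.norm.const_mul ε) (hμ.mono fun s hs => ?_)
    rw [norm_smul, Real.norm_eq_abs, abs_sub_comm]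
    gcongr
    exact (hp s hs).le
  have hlim : Tendsto (fun ε => ε * ∫ s, ‖f s‖ ∂μ) (𝓝[>] 0) (𝓝 0) := by
    simpa using ((tendsto_id (x := 𝓝 (0 : ℝ))).mul_const (∫ s, ‖f s‖ ∂μ)).mono_left
      nhdsWithin_le_nhds
  exact norm_le_zero_iff.1 (ge_of_tendsto hlim (eventually_nhdsWithin_of_forall happrox))

lemma ae_eq_zero_of_integral_pow_smul_eq_zero [CompleteSpace E] (hf : Integrable f μ)
    (hμ : ∀ᵐ s ∂μ, s ∈ Icc a b) (hmom : ∀ n : ℕ, ∫ s, s ^ n • f s ∂μ = 0) :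
    ∀ᵐ s ∂μ, f s = 0 :=
  ae_eq_zero_of_integral_contDiff_smul_eq_zero hf.locallyIntegrable fun _ hg _ =>
    integral_continuous_smul_eq_zero_of_integral_pow_smul_eq_zero hf hμ hmom hg.continuous

end Moments

lemma AnalyticOnNhd.eqOn_zero_of_ae_eq_zero_on_segment {g : ℂ → ℂ}
    (hg : AnalyticOnNhd ℂ g ℍₒ) {a b h : ℝ} (hab : a < b) (hh : 0 < h)
    (hzero : ∀ᵐ t : ℝ ∂(volume.restrict (Ioo a b)), g (t + h * I) = 0) : EqOn g 0 ℍₒ := by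
  set line : ℝ → ℂ := fun t => t + h * I
  have hline : Continuous line := by fun_prop
  have hmem : ∀ t, line t ∈ ℍₒ := fun t => by simp [line, hh]
  have hseg : EqOn (g ∘ line) 0 (Ioo a b) :=
    Measure.eqOn_open_of_ae_eq hzero isOpen_Ioo
      (hg.continuousOn.comp_continuous hline hmem).continuousOn continuousOn_const
  obtain ⟨t₀, ht₀⟩ := nonempty_Ioo.2 hab
  have hpunct : Tendsto line (𝓝[≠] t₀) (𝓝[≠] (line t₀)) :=
    tendsto_nhdsWithin_of_tendsto_nhds_of_eventually_within _
      (hline.continuousAt.mono_left nhdsWithin_le_nhds)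
      (eventually_nhdsWithin_of_forall fun t ht => by simpa [line] using ht)
  refine hg.eqOn_zero_of_preconnected_of_frequently_eq_zero
    (convex_halfSpace_im_gt 0).isPreconnected (hmem t₀)
    (hpunct.frequently (Eventually.frequently ?_))
  filter_upwards [nhdsWithin_le_nhds (Ioo_mem_nhds ht₀.1 ht₀.2)] with t ht using hseg ht

noncomputable def cauchyTransform (μ : Measure ℝ) (f : ℝ → ℂ) (z : ℂ) : ℂ :=
  ∫ s, f s / (z - s) ∂μ

lemma abs_im_le_norm_sub_ofReal (z : ℂ) (s : ℝ) : |z.im| ≤ ‖z - s‖ := by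
  simpa using abs_im_le_norm (z - s)

lemma sub_ofReal_ne_zero {z : ℂ} (hz : z ∈ ℍₒ) (s : ℝ) : z - s ≠ 0 := by
  intro h
  simpa [h] using (abs_pos.2 (ne_of_gt hz)).trans_le (abs_im_le_norm_sub_ofReal z s)

lemma norm_inv_sub_ofReal_pow_le {z : ℂ} (hz : z ∈ ℍₒ) (s : ℝ) (p : ℕ) :
    ‖((z - s) ^ p)⁻¹‖ ≤ (z.im ^ p)⁻¹ := by
  rw [norm_inv, norm_pow]
  have hz' : 0 < z.im := hz
  gcongr
  exact (le_abs_self _).trans (abs_im_le_norm_sub_ofReal z s)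

section CauchyTransform

variable {μ : Measure ℝ} {f : ℝ → ℂ}

lemma MeasureTheory.Integrable.div_sub_ofReal_pow (hf : Integrable f μ) {z : ℂ}
    (hz : z ∈ ℍₒ) (p : ℕ) : Integrable (fun s => f s / (z - s) ^ p) μ := by
  simp_rw [div_eq_mul_inv]
  exact hf.mul_bdd (c := (z.im ^ p)⁻¹) (by fun_prop)
    (ae_of_all _ (norm_inv_sub_ofReal_pow_le hz · p))

lemma hasDerivAt_cauchyTransform (hf : Integrable f μ) {z : ℂ} (hz : z ∈ ℍₒ) :
    HasDerivAt (cauchyTransform μ f) (-∫ s, f s / (z - s) ^ 2 ∂μ) z := by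
  have hz' : 0 < z.im := hz
  have him : ∀ w ∈ Metric.ball z (z.im / 2), z.im / 2 < w.im := fun w hw => by
    have := (abs_sub_lt_iff.1 ((abs_im_le_norm (w - z)).trans_lt (mem_ball_iff_norm.1 hw))).2
    linarith
  rw [← integral_neg]
  refine (hasDerivAt_integral_of_dominated_loc_of_deriv_le
    (F := fun w s => f s / (w - s)) (F' := fun w s => -(f s / (w - s) ^ 2))
    (bound := fun s => ‖f s‖ * ((z.im / 2) ^ 2)⁻¹) (Metric.ball_mem_nhds z (half_pos hz'))
    (Eventually.of_forall fun w => hf.1.mul (by fun_prop))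
    (by simpa using hf.div_sub_ofReal_pow hz 1)
    (hf.1.mul (by fun_prop)).neg ?_ (hf.norm.mul_const _) ?_).2
  · refine ae_of_all _ fun s w hw => ?_
    have hw' : w ∈ ℍₒ := (half_pos hz').trans (him w hw)
    rw [norm_neg, norm_div, div_eq_mul_inv, ← norm_inv]
    gcongr
    exact (norm_inv_sub_ofReal_pow_le hw' s 2).trans (by gcongr; exact (him w hw).le)
  · refine ae_of_all _ fun s w hw => ?_
    have hne := sub_ofReal_ne_zero ((half_pos hz').trans (him w hw) : w ∈ ℍₒ) s
    have hinv : HasDerivAt (fun y : ℂ => (y - s)⁻¹) (-1 / (w - s) ^ 2) w :=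
      ((hasDerivAt_id w).sub_const (s : ℂ)).inv hne
    simpa only [div_eq_mul_inv, neg_mul, one_mul, mul_neg] using hinv.const_mul (f s)

lemma differentiableOn_cauchyTransform (hf : Integrable f μ) :
    DifferentiableOn ℂ (cauchyTransform μ f) ℍₒ := fun _ hz =>
  (hasDerivAt_cauchyTransform hf hz).differentiableAt.differentiableWithinAt

lemma tendsto_mul_cauchyTransform_mul_I (hf : Integrable f μ) :
    Tendsto (fun y : ℝ => y * I * cauchyTransform μ f (y * I)) atTop (𝓝 (∫ s, f s ∂μ)) := by
  simp_rw [cauchyTransform, ← integral_const_mul]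
  have hratio : ∀ y : ℝ, y ≠ 0 → ∀ s : ℝ,
      y * I * (f s / (y * I - s)) = f s * (1 + I * ↑(s / y))⁻¹ :=
    fun y hy s => by
      have hy' : (y : ℂ) ≠ 0 := ofReal_ne_zero.2 hy
      have hsplit : (y : ℂ) * I - s = y * I * (1 + I * ↑(s / y)) := by
        push_cast
        field_simp
        ring_nf
        rw [I_sq]
        ring
      rw [hsplit]
      field_simp
  refine tendsto_integral_filter_of_dominated_convergence (fun s => ‖f s‖)
    (Eventually.of_forall fun y => (hf.1.mul (by fun_prop)).const_mul _) ?_ hf.norm ?_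
  · filter_upwards [eventually_gt_atTop 0] with y hy
    refine ae_of_all _ fun s => ?_
    rw [mul_div_assoc', norm_div, norm_mul, mul_comm, mul_div_assoc]
    refine mul_le_of_le_one_right (norm_nonneg _) (div_le_one_of_le₀ ?_ (norm_nonneg _))
    simpa [abs_of_pos hy] using abs_im_le_norm_sub_ofReal (y * I) s
  · refine ae_of_all _ fun s => ?_
    have hlim : Tendsto (fun y : ℝ => f s * (1 + I * ↑(s / y))⁻¹) atTop (𝓝 (f s)) := by
      have h0 : Tendsto (fun y : ℝ => s / y) atTop (𝓝 0) :=
        tendsto_const_nhds.div_atTop tendsto_id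
      simpa using ((continuous_ofReal.tendsto 0).comp h0 |>.const_mul I |>.const_add 1
        |>.inv₀ (by simp)).const_mul (f s)
    refine hlim.congr' ?_
    filter_upwards [eventually_gt_atTop 0] with y hy
    exact (hratio y hy.ne' s).symm

lemma tendsto_cauchyTransform_mul_I (hf : Integrable f μ) :
    Tendsto (fun y : ℝ => cauchyTransform μ f (y * I)) atTop (𝓝 0) := by
  have hinv : Tendsto (fun y : ℝ => (y * I)⁻¹) atTop (𝓝 0) := by
    simpa [mul_comm] using
      ((continuous_ofReal.tendsto 0).comp tendsto_inv_atTop_zero).mul_const I⁻¹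
  have hprod := (tendsto_mul_cauchyTransform_mul_I hf).mul hinv
  rw [mul_zero] at hprod
  refine hprod.congr' ?_
  filter_upwards [eventually_gt_atTop 0] with y hy
  rw [mul_comm, inv_mul_cancel_left₀ (mul_ne_zero (ofReal_ne_zero.2 hy.ne') I_ne_zero)]

lemma integral_eq_zero_of_cauchyTransform_eq_zero (hf : Integrable f μ)
    (h : EqOn (cauchyTransform μ f) 0 ℍₒ) : ∫ s, f s ∂μ = 0 := by
  refine tendsto_nhds_unique (tendsto_mul_cauchyTransform_mul_I hf)
    (tendsto_const_nhds.congr' ?_)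
  filter_upwards [eventually_gt_atTop 0] with y hy
  rw [h (by simpa using hy : (y * I : ℂ) ∈ ℍₒ), Pi.zero_apply, mul_zero]

lemma cauchyTransform_eq_zero_of_deriv_eq_zero (hf : Integrable f μ)
    (h : EqOn (deriv (cauchyTransform μ f)) 0 ℍₒ) :
    EqOn (cauchyTransform μ f) 0 ℍₒ := by
  intro z hz
  have hconst : ∀ w ∈ ℍₒ, cauchyTransform μ f w = cauchyTransform μ f z :=
    fun w hw => UpperHalfPlane.isOpen_upperHalfPlaneSet.is_const_of_deriv_eq_zero
      (convex_halfSpace_im_gt 0).isPreconnected (differentiableOn_cauchyTransform hf) h hw hz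
  refine tendsto_nhds_unique (tendsto_const_nhds.congr' ?_) (tendsto_cauchyTransform_mul_I hf)
  filter_upwards [eventually_gt_atTop 0] with y hy
  exact (hconst _ (by simpa using hy)).symm

lemma cauchyTransform_smul (hf : Integrable f μ) {z : ℂ} (hz : z ∈ ℍₒ) :
    cauchyTransform μ (fun s => s • f s) z = z * cauchyTransform μ f z - ∫ s, f s ∂μ := by
  have hpt : ∀ s : ℝ, s • f s / (z - s) = z * (f s / (z - s) ^ 1) - f s := fun s => by
    have := sub_ofReal_ne_zero hz s
    rw [real_smul]
    field_simp
    ring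
  simp_rw [cauchyTransform, hpt]
  rw [integral_sub ((hf.div_sub_ofReal_pow hz 1).const_mul z) hf, integral_const_mul]
  simp

lemma integral_pow_smul_eq_zero_of_cauchyTransform_eq_zero
    (hf : ∀ n : ℕ, Integrable (fun s => s ^ n • f s) μ)
    (h : EqOn (cauchyTransform μ f) 0 ℍₒ) (n : ℕ) :
    ∫ s, s ^ n • f s ∂μ = 0 := by
  have hCT : ∀ n : ℕ, EqOn (cauchyTransform μ fun s => s ^ n • f s) 0 ℍₒ := by
    intro n
    induction n with
    | zero => simpa using h
    | succ n ih =>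
      intro z hz
      have hmul := cauchyTransform_smul (hf n) hz
      simp only [smul_smul, ← pow_succ'] at hmul
      rw [hmul, ih hz, integral_eq_zero_of_cauchyTransform_eq_zero (hf n) ih]
      simp
  exact integral_eq_zero_of_cauchyTransform_eq_zero (hf n) (hCT n)

end CauchyTransform

lemma inv_ofReal_add_mul_I_sq {h : ℝ} (hh : h ≠ 0) (x : ℝ) :
    (((x : ℂ) + h * I) ^ 2)⁻¹ = π * I * (dPdx h x + I * dQdx h x) := by
  have hnorm : (x : ℂ) ^ 2 + (h : ℂ) ^ 2 ≠ 0 := by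
    exact_mod_cast (by positivity : x ^ 2 + h ^ 2 ≠ 0)
  have hz : (x : ℂ) + h * I ≠ 0 := fun hz => hh (by simpa using congrArg im hz)
  unfold dPdx dQdx
  push_cast
  field_simp
  ring_nf
  simp only [I_sq, I_pow_four, show I ^ 3 = -I by rw [pow_succ, I_sq, neg_one_mul]]
  ring

lemma integral_div_sub_sq_eq_dPdx_dQdx {μ : Measure ℝ} {ψ : ℝ → ℝ} (hψ : Integrable ψ μ)
    {h : ℝ} (hh : 0 < h) (t : ℝ) :
    ∫ s, (ψ s : ℂ) / (t + h * I - s) ^ 2 ∂μ =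
      π * I * ((∫ s, dPdx h (t - s) * ψ s ∂μ : ℝ) + I * (∫ s, dQdx h (t - s) * ψ s ∂μ : ℝ)) :=
    by
  have hpt : ∀ s : ℝ, (ψ s : ℂ) / (t + h * I - s) ^ 2 =
      π * I * ((dPdx h (t - s) * ψ s : ℝ) + I * (dQdx h (t - s) * ψ s : ℝ)) := fun s => by
    rw [div_eq_mul_inv, show (t : ℂ) + h * I - s = ((t - s : ℝ) : ℂ) + h * I by push_cast; ring,
      inv_ofReal_add_mul_I_sq hh.ne']
    push_cast
    ring
  have hint : Integrable (fun s =>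
      (π * I * ((dPdx h (t - s) * ψ s : ℝ) + I * (dQdx h (t - s) * ψ s : ℝ)) : ℂ)) μ :=
    (hψ.ofReal.div_sub_ofReal_pow (by simpa using hh) 2).congr (ae_of_all _ hpt)
  simp_rw [hpt]
  refine (integral_re_add_im hint).symm.trans ?_
  simp [integral_const_mul, integral_neg]
  ring_nf
  rw [I_sq]
  ring

lemma conv_indicator (k φ : ℝ → ℝ) {s : Set ℝ} (hs : MeasurableSet s) (t : ℝ) :
    conv k (s.indicator φ) t = ∫ u in s, k (t - u) * φ u := by
  rw [conv, ← integral_indicator hs]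
  simp only [indicator_mul_right]

theorem stmt9_general (a b c d h : ℝ) (hab : a < b) (hh : 0 < h)
    (φ : ℝ → ℝ) (hφ : MemLp φ 2 (volume.restrict (Set.Ioo c d)))
    (hz₁ : ∀ᵐ t ∂(volume.restrict (Set.Ioo a b)),
      conv (dPdx h) ((Set.Ioo c d).indicator φ) t = 0)
    (hz₂ : ∀ᵐ t ∂(volume.restrict (Set.Ioo a b)),
      conv (dQdx h) ((Set.Ioo c d).indicator φ) t = 0) :
    ∀ᵐ x ∂(volume.restrict (Set.Ioo c d)), φ x = 0 := by
  set μ := volume.restrict (Ioo c d)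
  have : IsFiniteMeasure μ := isFiniteMeasure_restrict.2 measure_Ioo_lt_top.ne
  have hφ₁ : Integrable φ μ := hφ.integrable one_le_two
  have hf : Integrable (fun s => (φ s : ℂ)) μ := hφ₁.ofReal
  have hderiv_line : ∀ᵐ t : ℝ ∂(volume.restrict (Ioo a b)),
      deriv (cauchyTransform μ fun s => φ s) (t + h * I) = 0 := by
    filter_upwards [hz₁, hz₂] with t h₁ h₂
    rw [(hasDerivAt_cauchyTransform hf (z := t + h * I) (by simpa using hh)).deriv,
      integral_div_sub_sq_eq_dPdx_dQdx hφ₁ hh, ← conv_indicator _ _ measurableSet_Ioo,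
      ← conv_indicator _ _ measurableSet_Ioo, h₁, h₂]
    simp
  have hanalytic : AnalyticOnNhd ℂ (deriv (cauchyTransform μ fun s => φ s)) ℍₒ :=
    ((differentiableOn_cauchyTransform hf).analyticOnNhd
      UpperHalfPlane.isOpen_upperHalfPlaneSet).deriv
  have hF : EqOn (cauchyTransform μ fun s => φ s) 0 ℍₒ :=
    cauchyTransform_eq_zero_of_deriv_eq_zero hf
      (hanalytic.eqOn_zero_of_ae_eq_zero_on_segment hab hh hderiv_line)
  have hsupp : ∀ᵐ s ∂μ, s ∈ Icc c d :=
    (ae_restrict_mem measurableSet_Ioo).mono fun _ hs => Ioo_subset_Icc_self hs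
  have hpow : ∀ n : ℕ, Integrable (fun s => s ^ n • (φ s : ℂ)) μ :=
    fun n => hf.continuous_smul_of_ae_mem_compact (by fun_prop) isCompact_Icc hsupp
  filter_upwards [ae_eq_zero_of_integral_pow_smul_eq_zero hf hsupp
    (integral_pow_smul_eq_zero_of_cauchyTransform_eq_zero hpow hF)] with s hs
  exact_mod_cast hs

/-- Injectivity of the adjoint field operator `b₂*`: if `φ ∈ L²(K)` (with `K = (c,d)`,
extended by zero off `K`) satisfies `(∂ₓP_h) ⋆ φ̃ = 0` and `(∂ₓQ_h) ⋆ φ̃ = 0` a.e. on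
`S = (a,b)`, then `φ = 0` a.e. on `K`. -/
theorem stmt9 (a b c d h : ℝ) (hab : a < b) (hcd : c < d) (hh : 0 < h)
    (φ : ℝ → ℝ) (hφ : MemLp φ 2 (volume.restrict (Set.Ioo c d)))
    (hz₁ : ∀ᵐ t ∂(volume.restrict (Set.Ioo a b)),
      conv (dPdx h) ((Set.Ioo c d).indicator φ) t = 0)
    (hz₂ : ∀ᵐ t ∂(volume.restrict (Set.Ioo a b)),
      conv (dQdx h) ((Set.Ioo c d).indicator φ) t = 0) :
    ∀ᵐ x ∂(volume.restrict (Set.Ioo c d)), φ x = 0 :=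
  stmt9_general a b c d h hab hh φ hφ hz₁ hz₂
end

section
/- Let S and K be nonempty open bounded intervals of ℝ and let h > 0. The field operator b₂ : L²(S,ℝ²) → L²(K) and its adjoint b₂* : L²(K) → L²(S,ℝ²) are compact operators: b₂ maps bounded subsets of L²(S,ℝ²) to relatively compact subsets of L²(K), and b₂* maps bounded subsets of L²(K) to relatively compact subsets of L²(S,ℝ²). -/
/-!
Since `h > 0`, both kernels `∂ₓP_h` and `∂ₓQ_h` are bounded and globally Lipschitz on `ℝ`.
A bounded subset of `L²` of a bounded interval is bounded in `L¹`, so its convolutions with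
either kernel form a uniformly bounded, equi-Lipschitz family of functions on `ℝ`. By
Arzelà–Ascoli on the closure of the target interval this family is relatively compact in the sup
norm, which dominates the `L²` norm on a set of finite measure.
-/

open MeasureTheory

open Set Bornology
open scoped NNReal ENNReal BoundedContinuousFunction

theorem lipschitzWith_of_hasDerivAt_abs_le {f f' : ℝ → ℝ} {C : ℝ}
    (hf : ∀ x, HasDerivAt f (f' x) x) (hC : ∀ x, |f' x| ≤ C) : LipschitzWith C.toNNReal f :=
  lipschitzWith_of_nnnorm_deriv_le (fun x => (hf x).differentiableAt) fun x => by
    rw [(hf x).deriv, ← NNReal.coe_le_coe, coe_nnnorm, Real.norm_eq_abs]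
    exact (hC x).trans (Real.le_coe_toNNReal C)

theorem hasDerivAt_sq_add_sq_sq (h x : ℝ) :
    HasDerivAt (fun x : ℝ => (x ^ 2 + h ^ 2) ^ 2) (2 * (x ^ 2 + h ^ 2) * (2 * x)) x :=
  (((hasDerivAt_id x).pow 2).add_const (h ^ 2)).fun_pow 2 |>.congr_deriv (by simp)

section Kernels

variable {h : ℝ}

theorem hasDerivAt_dPdx (hh : 0 < h) (x : ℝ) :
    HasDerivAt (dPdx h) (2 * h * (3 * x ^ 2 - h ^ 2) / (Real.pi * (x ^ 2 + h ^ 2) ^ 3)) x := by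
  have hnum : HasDerivAt (fun x => -(1 / Real.pi) * (2 * x * h)) (-(1 / Real.pi) * (2 * h)) x := by
    simpa using (((hasDerivAt_id x).const_mul 2).mul_const h).const_mul (-(1 / Real.pi))
  refine (hnum.div (hasDerivAt_sq_add_sq_sq h x) (by positivity)).congr_deriv ?_
  field_simp
  ring

theorem hasDerivAt_dQdx (hh : 0 < h) (x : ℝ) :
    HasDerivAt (dQdx h) (2 * x * (x ^ 2 - 3 * h ^ 2) / (Real.pi * (x ^ 2 + h ^ 2) ^ 3)) x := by
  have hnum : HasDerivAt (fun x => 1 / Real.pi * (h ^ 2 - x ^ 2)) (1 / Real.pi * -(2 * x)) x := by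
    simpa using ((hasDerivAt_pow 2 x).const_sub (h ^ 2)).const_mul (1 / Real.pi)
  refine (hnum.div (hasDerivAt_sq_add_sq_sq h x) (by positivity)).congr_deriv ?_
  field_simp
  ring

theorem abs_dPdx_le (hh : 0 < h) (x : ℝ) : |dPdx h x| ≤ 1 / (Real.pi * h ^ 2) := by
  rw [dPdx, abs_div, abs_of_pos (by positivity : (0:ℝ) < (x ^ 2 + h ^ 2) ^ 2),
    div_le_div_iff₀ (by positivity) (by positivity)]
  have : |-(1 / Real.pi) * (2 * x * h)| * Real.pi = 2 * |x| * h := by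
    rw [abs_mul, abs_neg, abs_of_pos (by positivity), abs_mul, abs_mul, abs_of_pos hh]
    field_simp; ring
  nlinarith [sq_nonneg (|x| - h), sq_abs x, abs_nonneg x, Real.pi_pos, sq_nonneg x]

theorem abs_dQdx_le (hh : 0 < h) (x : ℝ) : |dQdx h x| ≤ 1 / (Real.pi * h ^ 2) := by
  rw [dQdx, abs_div, abs_of_pos (by positivity : (0:ℝ) < (x ^ 2 + h ^ 2) ^ 2),
    div_le_div_iff₀ (by positivity) (by positivity), abs_mul, abs_of_pos (by positivity),
    one_div, inv_mul_eq_div, div_mul_eq_mul_div, div_le_iff₀ Real.pi_pos]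
  have hnum : |h ^ 2 - x ^ 2| ≤ x ^ 2 + h ^ 2 := abs_le.2 ⟨by nlinarith, by nlinarith⟩
  have := mul_le_mul hnum (le_add_of_nonneg_left (sq_nonneg x)) (sq_nonneg h) (by positivity)
  nlinarith [Real.pi_pos]

theorem lipschitzWith_dPdx (hh : 0 < h) :
    LipschitzWith (6 / (Real.pi * h ^ 3)).toNNReal (dPdx h) := by
  refine lipschitzWith_of_hasDerivAt_abs_le (hasDerivAt_dPdx hh) fun x => ?_
  rw [abs_div, abs_of_pos (by positivity : 0 < Real.pi * (x ^ 2 + h ^ 2) ^ 3),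
    div_le_div_iff₀ (by positivity) (by positivity)]
  have hnum : |2 * h * (3 * x ^ 2 - h ^ 2)| ≤ 6 * h * (x ^ 2 + h ^ 2) := by
    rw [abs_mul, abs_of_pos (by positivity : 0 < 2 * h)]
    have : |3 * x ^ 2 - h ^ 2| ≤ 3 * (x ^ 2 + h ^ 2) := abs_le.2 ⟨by nlinarith, by nlinarith⟩
    nlinarith
  have hr : h ^ 4 * (x ^ 2 + h ^ 2) ≤ (x ^ 2 + h ^ 2) ^ 3 := by
    have : h ^ 2 ≤ x ^ 2 + h ^ 2 := le_add_of_nonneg_left (sq_nonneg x)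
    nlinarith [mul_le_mul this this (sq_nonneg h) (by positivity)]
  nlinarith [mul_le_mul_of_nonneg_right hnum (by positivity : 0 ≤ Real.pi * h ^ 3), Real.pi_pos]

theorem lipschitzWith_dQdx (hh : 0 < h) :
    LipschitzWith (6 / (Real.pi * h ^ 3)).toNNReal (dQdx h) := by
  refine lipschitzWith_of_hasDerivAt_abs_le (hasDerivAt_dQdx hh) fun x => ?_
  rw [abs_div, abs_of_pos (by positivity : 0 < Real.pi * (x ^ 2 + h ^ 2) ^ 3),
    div_le_div_iff₀ (by positivity) (by positivity)]
  have hx : 2 * |x| * h ≤ x ^ 2 + h ^ 2 := by nlinarith [sq_nonneg (|x| - h), sq_abs x]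
  have hnum : |2 * x * (x ^ 2 - 3 * h ^ 2)| * h ≤ 3 * (x ^ 2 + h ^ 2) ^ 2 := by
    rw [abs_mul, abs_mul, abs_two]
    have : |x ^ 2 - 3 * h ^ 2| ≤ 3 * (x ^ 2 + h ^ 2) := abs_le.2 ⟨by nlinarith, by nlinarith⟩
    nlinarith [mul_le_mul hx this (abs_nonneg _) (by positivity), abs_nonneg x]
  have hr : h ^ 2 ≤ x ^ 2 + h ^ 2 := le_add_of_nonneg_left (sq_nonneg x)
  have hcube : |2 * x * (x ^ 2 - 3 * h ^ 2)| * h ^ 3 ≤ 6 * (x ^ 2 + h ^ 2) ^ 3 := by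
    nlinarith [mul_le_mul hnum hr (sq_nonneg h) (by positivity),
      pow_pos (by positivity : 0 < x ^ 2 + h ^ 2) 3]
  nlinarith [mul_le_mul_of_nonneg_left hcube Real.pi_pos.le]

end Kernels

section Convolution

variable {k g : ℝ → ℝ} {C : ℝ} {K N : ℝ≥0}

theorem integrable_conv_integrand (hkb : ∀ z, |k z| ≤ C) (hk : Continuous k) (hg : Integrable g)
    (x : ℝ) : Integrable (fun t => k (x - t) * g t) :=
  hg.bdd_mul (hk.comp (continuous_sub_left x)).aestronglyMeasurable
    (.of_forall fun t => (Real.norm_eq_abs _).trans_le (hkb (x - t)))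

theorem abs_conv_le (hkb : ∀ z, |k z| ≤ C) (hg : Integrable g) (hN : ∫ t, |g t| ≤ N) (x : ℝ) :
    |conv k g x| ≤ C * N := by
  have hC : 0 ≤ C := (abs_nonneg _).trans (hkb 0)
  calc |conv k g x| ≤ ∫ t : ℝ, C * |g t| := by
        rw [conv, ← Real.norm_eq_abs]
        refine norm_integral_le_of_norm_le (hg.abs.const_mul C) (.of_forall fun t => ?_)
        rw [Real.norm_eq_abs, abs_mul]
        exact mul_le_mul_of_nonneg_right (hkb _) (abs_nonneg _)
    _ ≤ C * N := by rw [integral_const_mul]; exact mul_le_mul_of_nonneg_left hN hC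

theorem lipschitzWith_conv (hkb : ∀ z, |k z| ≤ C) (hk : LipschitzWith K k) (hg : Integrable g)
    (hN : ∫ t, |g t| ≤ N) : LipschitzWith (K * N) (conv k g) := by
  refine LipschitzWith.of_dist_le_mul fun x y => ?_
  have hint := integrable_conv_integrand hkb hk.continuous hg
  calc dist (conv k g x) (conv k g y) = |∫ t, (k (x - t) - k (y - t)) * g t| := by
        simp_rw [Real.dist_eq, conv, ← integral_sub (hint x) (hint y), sub_mul]
    _ ≤ ∫ t : ℝ, K * |x - y| * |g t| := by
        rw [← Real.norm_eq_abs]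
        refine norm_integral_le_of_norm_le (hg.abs.const_mul _) (.of_forall fun t => ?_)
        rw [Real.norm_eq_abs, abs_mul]
        refine mul_le_mul_of_nonneg_right ?_ (abs_nonneg _)
        simpa [Real.dist_eq] using hk.dist_le_mul (x - t) (y - t)
    _ ≤ K * N * dist x y := by
        rw [integral_const_mul, Real.dist_eq, mul_right_comm]
        gcongr

end Convolution

theorem integral_norm_le_sqrt_mul_norm {α E : Type*} [MeasurableSpace α] [NormedAddCommGroup E]
    {μ : Measure α} [IsFiniteMeasure μ] (u : Lp E 2 μ) :
    ∫ x, ‖u x‖ ∂μ ≤ √(μ.real univ) * ‖u‖ := by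
  have hL1 := eLpNorm_le_eLpNorm_mul_rpow_measure_univ (p := 1) (q := 2) one_le_two
    (Lp.aestronglyMeasurable u)
  norm_num at hL1
  rw [integral_norm_eq_lintegral_enorm (Lp.aestronglyMeasurable u),
    ← eLpNorm_one_eq_lintegral_enorm, Lp.norm_def, mul_comm, Real.sqrt_eq_rpow, measureReal_def, ENNReal.toReal_rpow,
    ← ENNReal.toReal_mul]
  exact ENNReal.toReal_mono (ENNReal.mul_ne_top (Lp.eLpNorm_ne_top u)
    (ENNReal.rpow_ne_top_of_nonneg (by norm_num) (measure_ne_top μ univ))) hL1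

theorem Bornology.IsBounded.exists_integral_abs_indicator_le {s : Set ℝ} (hs : MeasurableSet s)
    [IsFiniteMeasure (volume.restrict s)] {A : Set (Lp ℝ 2 (volume.restrict s))}
    (hA : IsBounded A) :
    ∃ N : ℝ≥0, ∀ u ∈ A, Integrable (s.indicator u) ∧ ∫ t, |s.indicator u t| ≤ N := by
  obtain ⟨R, hR⟩ := hA.exists_norm_le
  refine ⟨(√(volume.real s) * R).toNNReal, fun u hu => ⟨?_, ?_⟩⟩
  · exact (integrable_indicator_iff hs).2 ((Lp.memLp u).integrable one_le_two)
  · calc ∫ t, |s.indicator u t| = ∫ t, ‖u t‖ ∂volume.restrict s := by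
          simp_rw [← Real.norm_eq_abs, norm_indicator_eq_indicator_norm, integral_indicator hs]
      _ ≤ √(volume.real s) * ‖u‖ := by
          simpa using integral_norm_le_sqrt_mul_norm u
      _ ≤ _ := (mul_le_mul_of_nonneg_left (hR u hu) (Real.sqrt_nonneg _)).trans
          (Real.le_coe_toNNReal _)

theorem isCompact_closure_of_ae_eq_lipschitzWith {c d : ℝ} (hcd : c ≤ d) {p : ℝ≥0∞} [Fact (1 ≤ p)]
    {μ : Measure ℝ} [IsFiniteMeasure μ] (hμ : ∀ᵐ x ∂μ, x ∈ Icc c d) {K : ℝ≥0} {M : ℝ}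
    {s : Set (Lp ℝ p μ)}
    (hs : ∀ f ∈ s, ∃ g : ℝ → ℝ, LipschitzWith K g ∧ (∀ x, |g x| ≤ M) ∧ f =ᵐ[μ] g) :
    IsCompact (closure s) := by
  set F : Set (Icc c d →ᵇ ℝ) := {u | LipschitzWith K u ∧ ∀ z, u z ∈ Icc (-M) M}
  have hF : IsCompact (closure F) :=
    BoundedContinuousFunction.arzela_ascoli (Icc (-M) M) isCompact_Icc F (fun _ z hu => hu.2 z)
      (LipschitzWith.uniformEquicontinuous (fun u : F => (u : Icc c d → ℝ)) K
        (fun u => u.2.1)).equicontinuous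
  -- Extending constantly off `Icc c d` loses nothing, as `μ` is carried by `Icc c d`.
  let extend : (Icc c d →ᵇ ℝ) → Lp ℝ p μ := fun u =>
    BoundedContinuousFunction.toLp p μ ℝ (u.compContinuous ⟨projIcc c d hcd, continuous_projIcc⟩)
  have hextend : Continuous extend :=
    (BoundedContinuousFunction.toLp p μ ℝ).continuous.comp
      (BoundedContinuousFunction.continuous_compContinuous _)
  refine (hF.image hextend).closure_of_subset fun f hf => ?_
  obtain ⟨g, hgK, hgM, hfg⟩ := hs f hf
  refine ⟨.mkOfCompact ⟨fun z => g z, hgK.continuous.comp continuous_subtype_val⟩,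
    subset_closure ⟨?_, fun z => abs_le.1 (hgM z)⟩, ?_⟩
  · exact (mul_one K ▸ hgK.comp (LipschitzWith.subtype_val (Icc c d)) :)
  · refine Lp.ext (((BoundedContinuousFunction.coeFn_toLp p μ ℝ _)).trans ?_ |>.trans hfg.symm)
    filter_upwards [hμ] with x hx
    simp [projIcc_of_mem hcd hx]

theorem isCompact_closure_setOf_ae_eq_conv_indicator {c d : ℝ} (hcd : c ≤ d) {p : ℝ≥0∞}
    [Fact (1 ≤ p)] {μ : Measure ℝ} [IsFiniteMeasure μ] (hμ : ∀ᵐ x ∂μ, x ∈ Icc c d) {s : Set ℝ}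
    (hs : MeasurableSet s) [IsFiniteMeasure (volume.restrict s)] {k : ℝ → ℝ} {C : ℝ} {K : ℝ≥0}
    (hkb : ∀ z, |k z| ≤ C) (hk : LipschitzWith K k) {A : Set (Lp ℝ 2 (volume.restrict s))}
    (hA : IsBounded A) :
    IsCompact (closure {f : Lp ℝ p μ | ∃ φ ∈ A, f =ᵐ[μ] conv k (s.indicator φ)}) := by
  obtain ⟨N, hN⟩ := hA.exists_integral_abs_indicator_le hs
  refine isCompact_closure_of_ae_eq_lipschitzWith hcd hμ (K := K * N) (M := C * N) ?_
  rintro f ⟨φ, hφ, hf⟩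
  obtain ⟨hg, hgN⟩ := hN φ hφ
  exact ⟨_, lipschitzWith_conv hkb hk hg hgN, abs_conv_le hkb hg hgN, hf⟩

theorem isCompact_closure_setOf_ae_eq_neg_conv_add_conv {c d : ℝ} (hcd : c ≤ d) {p : ℝ≥0∞}
    [Fact (1 ≤ p)] {μ : Measure ℝ} [IsFiniteMeasure μ] (hμ : ∀ᵐ x ∂μ, x ∈ Icc c d) {s : Set ℝ}
    (hs : MeasurableSet s) [IsFiniteMeasure (volume.restrict s)] {k₁ k₂ : ℝ → ℝ} {C : ℝ}
    {K : ℝ≥0} (hkb₁ : ∀ z, |k₁ z| ≤ C) (hk₁ : LipschitzWith K k₁) (hkb₂ : ∀ z, |k₂ z| ≤ C)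
    (hk₂ : LipschitzWith K k₂)
    {A : Set (Lp ℝ 2 (volume.restrict s) × Lp ℝ 2 (volume.restrict s))} (hA : IsBounded A) :
    IsCompact (closure {f : Lp ℝ p μ | ∃ q ∈ A,
      f =ᵐ[μ] fun x => -conv k₁ (s.indicator q.1) x + conv k₂ (s.indicator q.2) x}) := by
  obtain ⟨N₁, hN₁⟩ := (isBounded_image_fst_and_snd.2 hA).1.exists_integral_abs_indicator_le hs
  obtain ⟨N₂, hN₂⟩ := (isBounded_image_fst_and_snd.2 hA).2.exists_integral_abs_indicator_le hs
  refine isCompact_closure_of_ae_eq_lipschitzWith hcd hμ (K := K * N₁ + K * N₂)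
    (M := C * N₁ + C * N₂) ?_
  rintro f ⟨q, hq, hf⟩
  obtain ⟨hg₁, hgN₁⟩ := hN₁ q.1 (mem_image_of_mem _ hq)
  obtain ⟨hg₂, hgN₂⟩ := hN₂ q.2 (mem_image_of_mem _ hq)
  refine ⟨_, (lipschitzWith_conv hkb₁ hk₁ hg₁ hgN₁).neg.add (lipschitzWith_conv hkb₂ hk₂ hg₂ hgN₂),
    fun x => ?_, hf⟩
  calc |-conv k₁ (s.indicator q.1) x + conv k₂ (s.indicator q.2) x|
      ≤ |conv k₁ (s.indicator q.1) x| + |conv k₂ (s.indicator q.2) x| := by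
        simpa only [abs_neg] using abs_add_le (-conv k₁ (s.indicator q.1) x) _
    _ ≤ C * N₁ + C * N₂ := add_le_add (abs_conv_le hkb₁ hg₁ hgN₁ x) (abs_conv_le hkb₂ hg₂ hgN₂ x)

theorem ae_restrict_Ioo_mem_Icc (a b : ℝ) : ∀ᵐ x ∂volume.restrict (Ioo a b), x ∈ Icc a b :=
  (ae_restrict_mem measurableSet_Ioo).mono fun _ hx => Ioo_subset_Icc_self hx

/-- `L²(S,ℝ²)` is identified with `L²(S) × L²(S)`. -/
theorem stmt14 (a b c d h : ℝ) (hab : a < b) (hcd : c < d) (hh : 0 < h) :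
    let S := Set.Ioo a b
    let K := Set.Ioo c d
    (∀ A : Set (Lp ℝ 2 (volume.restrict S) × Lp ℝ 2 (volume.restrict S)),
      Bornology.IsBounded A →
      IsCompact (closure {f : Lp ℝ 2 (volume.restrict K) | ∃ p ∈ A,
        (f : ℝ → ℝ) =ᵐ[volume.restrict K]
          fun x => -conv (dPdx h) (S.indicator ⇑p.1) x + conv (dQdx h) (S.indicator ⇑p.2) x})) ∧
    (∀ A : Set (Lp ℝ 2 (volume.restrict K)), Bornology.IsBounded A →
      IsCompact (closure {q : Lp ℝ 2 (volume.restrict S) × Lp ℝ 2 (volume.restrict S) |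
        ∃ φ ∈ A,
        (q.1 : ℝ → ℝ) =ᵐ[volume.restrict S] conv (dPdx h) (K.indicator ⇑φ) ∧
        (q.2 : ℝ → ℝ) =ᵐ[volume.restrict S] conv (dQdx h) (K.indicator ⇑φ)})) := by
  intro S K
  refine ⟨fun A hA => ?_, fun A hA => ?_⟩
  · exact isCompact_closure_setOf_ae_eq_neg_conv_add_conv hcd.le (ae_restrict_Ioo_mem_Icc c d)
      measurableSet_Ioo (abs_dPdx_le hh) (lipschitzWith_dPdx hh) (abs_dQdx_le hh)
      (lipschitzWith_dQdx hh) hA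
  · have hP := isCompact_closure_setOf_ae_eq_conv_indicator hab.le (p := 2)
      (ae_restrict_Ioo_mem_Icc a b) measurableSet_Ioo (abs_dPdx_le hh) (lipschitzWith_dPdx hh) hA
    have hQ := isCompact_closure_setOf_ae_eq_conv_indicator hab.le (p := 2)
      (ae_restrict_Ioo_mem_Icc a b) measurableSet_Ioo (abs_dQdx_le hh) (lipschitzWith_dQdx hh) hA
    refine (hP.prod hQ).closure_of_subset ?_
    rintro q ⟨φ, hφ, h₁, h₂⟩
    exact ⟨subset_closure ⟨φ, hφ, h₁⟩, subset_closure ⟨φ, hφ, h₂⟩⟩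
end
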